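/- Let ξ* be a complex balanced steady state of a polyexponential system with vector field φ and stoichiometric subspace S, and let D = diag(d_1,...,d_n) with d_i > 0. Define L(ξ) = Σ_{i=1}^n (1/d_i)(ξ_i - ξ*_i)^2. Then ⟨Dφ(ξ), ∇L(ξ)⟩ ≤ 0 for all ξ ∈ ℝ^n, with equality if and only if ξ - ξ* ∈ S^⊥. -/

import Mathlib

/-!
With `x = ξ - ξ*` and `a_e = κ_e e^{⟨ξ*, y_i⟩}` for `e = (i, j)`, one has
`⟨φ(ξ), x⟩ = Σ_e a_e e^{⟨x, y_i⟩} (⟨x, y_j⟩ - ⟨x, y_i⟩)`. Complex balance says the weights `a`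
have equal in- and out-flow at every vertex, so `Σ_e a_e e^{⟨x, y_j⟩} = Σ_e a_e e^{⟨x, y_i⟩}`,
and subtracting this turns `⟨φ(ξ), x⟩` into minus a positive combination of Bregman divergences
`e^{⟨x, y_j⟩} - e^{⟨x, y_i⟩} - e^{⟨x, y_i⟩}(⟨x, y_j⟩ - ⟨x, y_i⟩)` of the strictly convex `exp`.
These vanish exactly when `⟨x, y_j - y_i⟩ = 0` on every edge, i.e. when `x ∈ Sᗮ`.
-/

open scoped RealInnerProductSpace

open Finset

namespace Real

noncomputable def expBregman (u v : ℝ) : ℝ := exp v - exp u - exp u * (v - u)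

lemma expBregman_eq_mul (u v : ℝ) : expBregman u v = exp u * (exp (v - u) - (v - u + 1)) := by
  rw [expBregman, exp_sub]
  field_simp
  ring

lemma expBregman_nonneg (u v : ℝ) : 0 ≤ expBregman u v := by
  rw [expBregman_eq_mul]
  exact mul_nonneg (exp_pos u).le (sub_nonneg.2 (add_one_le_exp _))

lemma expBregman_eq_zero_iff {u v : ℝ} : expBregman u v = 0 ↔ u = v := by
  refine ⟨fun h => ?_, fun h => by simp [expBregman, h]⟩
  by_contra huv
  have hlt := add_one_lt_exp (sub_ne_zero.2 (Ne.symm huv))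
  rw [expBregman_eq_mul] at h
  exact (mul_pos (exp_pos u) (sub_pos.2 hlt)).ne' h

end Real

section Balanced

variable {α : Type*} [Fintype α] [DecidableEq α] {E : Finset (α × α)} {a : α × α → ℝ}

lemma Finset.sum_mul_snd_eq_sum_mul_fst
    (hbal : ∀ j, ∑ e ∈ E with e.2 = j, a e = ∑ e ∈ E with e.1 = j, a e) (f : α → ℝ) :
    ∑ e ∈ E, a e * f e.2 = ∑ e ∈ E, a e * f e.1 := by
  rw [← sum_fiberwise E Prod.snd, ← sum_fiberwise E Prod.fst]
  refine sum_congr rfl fun j _ => ?_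
  calc ∑ e ∈ E with e.2 = j, a e * f e.2
      = (∑ e ∈ E with e.2 = j, a e) * f j := by
        rw [sum_mul]; exact sum_congr rfl fun e he => by rw [(mem_filter.1 he).2]
    _ = (∑ e ∈ E with e.1 = j, a e) * f j := by rw [hbal]
    _ = ∑ e ∈ E with e.1 = j, a e * f e.1 := by
        rw [sum_mul]; exact sum_congr rfl fun e he => by rw [(mem_filter.1 he).2]

lemma Finset.sum_mul_exp_mul_sub_eq_neg_sum_expBregman
    (hbal : ∀ j, ∑ e ∈ E with e.2 = j, a e = ∑ e ∈ E with e.1 = j, a e) (u : α → ℝ) :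
    ∑ e ∈ E, a e * Real.exp (u e.1) * (u e.2 - u e.1) =
      -∑ e ∈ E, a e * Real.expBregman (u e.1) (u e.2) := by
  have h := sum_mul_snd_eq_sum_mul_fst hbal (Real.exp ∘ u)
  simp only [Function.comp_apply] at h
  simp only [Real.expBregman, mul_sub, sum_sub_distrib, h, mul_assoc]
  ring

end Balanced

lemma Submodule.mem_orthogonal_span_iff {𝕜 E : Type*} [RCLike 𝕜] [NormedAddCommGroup E]
    [InnerProductSpace 𝕜 E] {s : Set E} {x : E} :
    x ∈ (span 𝕜 s)ᗮ ↔ ∀ u ∈ s, inner 𝕜 x u = 0 := by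
  rw [← span_singleton_le_iff_mem, ← isOrtho_iff_le, isOrtho_span]
  simp

lemma EuclideanSpace.inner_eq_mul_inner_of_scaled {ι : Type*} [Fintype ι] {d : ι → ℝ}
    (hd : ∀ k, d k ≠ 0) (c : ℝ) {v g w x : EuclideanSpace ℝ ι}
    (hv : ∀ k, v k = d k * w k) (hg : ∀ k, g k = c / d k * x k) :
    ⟪v, g⟫ = c * ⟪w, x⟫ := by
  simp only [PiLp.inner_apply, RCLike.inner_apply, conj_trivial, mul_sum, hv, hg]
  refine sum_congr rfl fun k _ => ?_
  field_simp [hd k]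

lemma inner_sum_exp_smul_sub_sub {ι F : Type*} [NormedAddCommGroup F] [InnerProductSpace ℝ F]
    (y : ι → F) (E : Finset (ι × ι)) (κ : ι × ι → ℝ) (ξ ξs : F) :
    ⟪∑ e ∈ E, (κ e * Real.exp ⟪ξ, y e.1⟫) • (y e.2 - y e.1), ξ - ξs⟫ =
      ∑ e ∈ E, κ e * Real.exp ⟪ξs, y e.1⟫ * Real.exp ⟪ξ - ξs, y e.1⟫ *
        (⟪ξ - ξs, y e.2⟫ - ⟪ξ - ξs, y e.1⟫) := by
  refine (sum_inner _ _ _).trans (sum_congr rfl fun e _ => ?_)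
  have hsplit : Real.exp ⟪ξ, y e.1⟫ = Real.exp ⟪ξs, y e.1⟫ * Real.exp ⟪ξ - ξs, y e.1⟫ := by
    rw [← Real.exp_add, ← inner_add_left, add_sub_cancel]
  rw [real_inner_smul_left, inner_sub_left, real_inner_comm (ξ - ξs), real_inner_comm (ξ - ξs),
    hsplit]
  ring

theorem scaled_polyexp_Lyapunov_general {n m : ℕ}
    (y : Fin m → EuclideanSpace ℝ (Fin n))
    (E : Finset (Fin m × Fin m))
    (κ : Fin m × Fin m → ℝ) (hκ : ∀ e ∈ E, 0 < κ e)
    (S : Submodule ℝ (EuclideanSpace ℝ (Fin n)))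
    (hS : S = Submodule.span ℝ {v : EuclideanSpace ℝ (Fin n) | ∃ e ∈ E, v = y e.2 - y e.1})
    (φ : EuclideanSpace ℝ (Fin n) → EuclideanSpace ℝ (Fin n))
    (hφ : ∀ ξ, φ ξ = ∑ e ∈ E, (κ e * Real.exp ⟪ξ, y e.1⟫) • (y e.2 - y e.1))
    (ξs : EuclideanSpace ℝ (Fin n))
    (hcb : ∀ i : Fin m,
      ∑ e ∈ E.filter (fun e => e.1 = i), κ e * Real.exp ⟪ξs, y i⟫ =
      ∑ e ∈ E.filter (fun e => e.2 = i), κ e * Real.exp ⟪ξs, y e.1⟫)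
    (d : Fin n → ℝ) (hd : ∀ k, 0 < d k)
    (ξ : EuclideanSpace ℝ (Fin n))
    -- v = D φ(ξ), g = ∇L(ξ) = 2 D⁻¹ (ξ - ξ*)
    (v g : EuclideanSpace ℝ (Fin n))
    (hv : ∀ k, v k = d k * φ ξ k)
    (hg : ∀ k, g k = 2 / d k * (ξ k - ξs k)) :
    ⟪v, g⟫ ≤ 0 ∧ (⟪v, g⟫ = 0 ↔ ξ - ξs ∈ Sᗮ) := by
  set a : Fin m × Fin m → ℝ := fun e => κ e * Real.exp ⟪ξs, y e.1⟫
  have ha : ∀ e ∈ E, 0 < a e := fun e he => mul_pos (hκ e he) (Real.exp_pos _)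
  have hbal : ∀ j, ∑ e ∈ E with e.2 = j, a e = ∑ e ∈ E with e.1 = j, a e := fun j =>
    ((sum_congr rfl fun e he => by simp only [a, (mem_filter.1 he).2]).trans (hcb j)).symm
  set D : Fin m × Fin m → ℝ := fun e =>
    a e * Real.expBregman ⟪ξ - ξs, y e.1⟫ ⟪ξ - ξs, y e.2⟫
  have hD : ∀ e ∈ E, 0 ≤ D e := fun e he => mul_nonneg (ha e he).le (Real.expBregman_nonneg _ _)
  have hvg : ⟪v, g⟫ = -2 * ∑ e ∈ E, D e := by
    rw [EuclideanSpace.inner_eq_mul_inner_of_scaled (fun k => (hd k).ne') 2 (x := ξ - ξs)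
      hv (fun k => by rw [hg, PiLp.sub_apply]), hφ,
      inner_sum_exp_smul_sub_sub,
      sum_mul_exp_mul_sub_eq_neg_sum_expBregman hbal (fun i => ⟪ξ - ξs, y i⟫)]
    ring
  have hsum_nonneg : 0 ≤ ∑ e ∈ E, D e := sum_nonneg hD
  refine ⟨by linarith, ?_⟩
  rw [hvg, hS, Submodule.mem_orthogonal_span_iff]
  simp only [neg_mul, neg_eq_zero, mul_eq_zero, OfNat.ofNat_ne_zero, false_or,
    sum_eq_zero_iff_of_nonneg hD]
  have hgen : (∀ u ∈ {v | ∃ e ∈ E, v = y e.2 - y e.1}, ⟪ξ - ξs, u⟫ = 0) ↔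
      ∀ e ∈ E, ⟪ξ - ξs, y e.2 - y e.1⟫ = 0 :=
    ⟨fun h e he => h _ ⟨e, he, rfl⟩, by rintro h _ ⟨e, he, rfl⟩; exact h e he⟩
  rw [hgen]
  refine forall₂_congr fun e he => ?_
  rw [inner_sub_right, sub_eq_zero]
  exact (mul_eq_zero_iff_left (ha e he).ne').trans (Real.expBregman_eq_zero_iff.trans eq_comm)

theorem scaled_polyexp_Lyapunov {n m : ℕ}
    (y : Fin m → EuclideanSpace ℝ (Fin n))
    (E : Finset (Fin m × Fin m)) (hE : ∀ e ∈ E, e.1 ≠ e.2)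
    (κ : Fin m × Fin m → ℝ) (hκ : ∀ e ∈ E, 0 < κ e)
    (S : Submodule ℝ (EuclideanSpace ℝ (Fin n)))
    (hS : S = Submodule.span ℝ {v : EuclideanSpace ℝ (Fin n) | ∃ e ∈ E, v = y e.2 - y e.1})
    (φ : EuclideanSpace ℝ (Fin n) → EuclideanSpace ℝ (Fin n))
    (hφ : ∀ ξ, φ ξ = ∑ e ∈ E, (κ e * Real.exp ⟪ξ, y e.1⟫) • (y e.2 - y e.1))
    (ξs : EuclideanSpace ℝ (Fin n))
    (hcb : ∀ i : Fin m,
      ∑ e ∈ E.filter (fun e => e.1 = i), κ e * Real.exp ⟪ξs, y i⟫ =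
      ∑ e ∈ E.filter (fun e => e.2 = i), κ e * Real.exp ⟪ξs, y e.1⟫)
    (d : Fin n → ℝ) (hd : ∀ k, 0 < d k)
    (ξ : EuclideanSpace ℝ (Fin n))
    -- v = D φ(ξ), g = ∇L(ξ) = 2 D⁻¹ (ξ - ξ*)
    (v g : EuclideanSpace ℝ (Fin n))
    (hv : ∀ k, v k = d k * φ ξ k)
    (hg : ∀ k, g k = 2 / d k * (ξ k - ξs k)) :
    ⟪v, g⟫ ≤ 0 ∧ (⟪v, g⟫ = 0 ↔ ξ - ξs ∈ Sᗮ) :=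
  scaled_polyexp_Lyapunov_general y E κ hκ S hS φ hφ ξs hcb d hd ξ v g hv hg
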